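/- arXiv:1008.3131 — 2 statements merged into one kernel-verified Lean document; each statement's English description precedes it below -/
import Mathlib

section
/- Let ν be a finite positive Borel measure supported in the closed unit disk {z ∈ ℂ : |z| ≤ 1}. If lim_{|a|→1⁻, a ∈ 𝔻} ∫ (1 - |a|²)/|1 - conj(a)·ξ|² dν(ξ) = 0, then ν(𝕋) = 0. -/
/-! Place about `2π / (1 - r)` points `w` on `𝕋` so that every `ξ ∈ 𝕋` lies within `1 - r` of one
of them. For such a pair the kernel `(1 - |a|²) / |1 - conj a ξ|²` at `a = r w` is at least
`1 / (4 (1 - r))`, so summing the kernels over these points and integrating against `ν` gives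
`ν(𝕋) / (4 (1 - r)) ≤ (number of points) · sup_{|a| = r} ∫ kernel dν`, that is
`ν(𝕋) ≤ 4 (2π + 3) · sup_{|a| = r} ∫ kernel dν`, and the right side tends to `0` as `r → 1⁻`. -/

open MeasureTheory Filter Metric Complex

/-- The filter of points `a` of the open unit disk `𝔻` with `|a| → 1⁻`. -/
noncomputable def toBoundary : Filter ℂ :=
  Filter.comap (fun a : ℂ => ‖a‖) (nhdsWithin 1 (Set.Iio 1))

open Real Finset ComplexConjugate

lemma norm_exp_mul_I_sub_exp_mul_I_le (θ φ : ℝ) :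
    ‖exp (θ * I) - exp (φ * I)‖ ≤ |θ - φ| := by
  have h : exp (θ * I) - exp (φ * I) = exp (φ * I) * (exp (I * (θ - φ : ℝ)) - 1) := by
    rw [mul_sub, ← Complex.exp_add]; push_cast; ring_nf
  rw [h, norm_mul, norm_exp_ofReal_mul_I, one_mul]
  exact norm_exp_I_mul_ofReal_sub_one_le

lemma exists_finset_sphere_cover {δ : ℝ} (hδ : 0 < δ) :
    ∃ S : Finset ℂ, (∀ w ∈ S, ‖w‖ = 1) ∧ (#S : ℝ) ≤ 2 * π / δ + 3 ∧
      ∀ ξ : ℂ, ‖ξ‖ = 1 → ∃ w ∈ S, ‖ξ - w‖ ≤ δ := by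
  set M : ℕ := ⌈π / δ⌉₊
  have hM : (M : ℝ) < π / δ + 1 := Nat.ceil_lt_add_one (by positivity)
  refine ⟨(Icc (-(M : ℤ)) M).image fun k : ℤ => exp ((k * δ : ℝ) * I), ?_, ?_, ?_⟩
  · simp only [mem_image]
    rintro _ ⟨k, -, rfl⟩
    exact norm_exp_ofReal_mul_I _
  · have hcard : (M + 1 - -(M : ℤ)).toNat = 2 * M + 1 := by omega
    calc (#_ : ℝ) ≤ #(Icc (-(M : ℤ)) M) := mod_cast card_image_le
      _ = 2 * M + 1 := by rw [Int.card_Icc, hcard]; push_cast; ring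
      _ ≤ 2 * π / δ + 3 := by rw [mul_div_assoc]; linarith
  · intro ξ hξ
    set x := arg ξ / δ
    have hx : |x| ≤ π / δ := by
      rw [abs_div, abs_of_pos hδ]; gcongr; exact abs_arg_le_pi ξ
    have hround := abs_sub_round x
    have hkM : |round x| ≤ (M : ℤ) := by
      refine Int.lt_add_one_iff.1 ?_
      have := abs_sub_abs_le_abs_sub (round x : ℝ) x
      rw [abs_sub_comm] at this
      have := Nat.le_ceil (π / δ)
      exact_mod_cast (by linarith : |(round x : ℝ)| < M + 1)
    refine ⟨_, mem_image_of_mem _ (mem_Icc.2 (abs_le.1 hkM)), ?_⟩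
    calc ‖ξ - exp ((round x * δ : ℝ) * I)‖
        = ‖exp (arg ξ * I) - exp ((round x * δ : ℝ) * I)‖ := by
          congr 2; simpa [hξ] using (norm_mul_exp_arg_mul_I ξ).symm
      _ ≤ |arg ξ - round x * δ| := norm_exp_mul_I_sub_exp_mul_I_le _ _
      _ = δ * |x - round x| := by
        rw [← abs_of_pos hδ, ← abs_mul, abs_of_pos hδ, mul_sub, mul_div_cancel₀ _ hδ.ne', mul_comm]
      _ ≤ δ := by nlinarith

-- Agrees with Mathlib's `poissonKernel 0 a ξ` only for `‖ξ‖ = 1`; here `ξ` ranges over the closed disk.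
noncomputable def poissonKernelDisk (a ξ : ℂ) : ℝ :=
  (1 - ‖a‖ ^ 2) / ‖1 - conj a * ξ‖ ^ 2

section Kernel

variable {a ξ : ℂ}

lemma poissonKernelDisk_nonneg (ha : ‖a‖ ≤ 1) (ξ : ℂ) : 0 ≤ poissonKernelDisk a ξ :=
  div_nonneg (by nlinarith [norm_nonneg a]) (by positivity)

lemma one_sub_norm_le_norm_one_sub_conj_mul (hξ : ‖ξ‖ ≤ 1) : 1 - ‖a‖ ≤ ‖1 - conj a * ξ‖ := by
  have h : ‖conj a * ξ‖ ≤ ‖a‖ := by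
    rw [norm_mul, RCLike.norm_conj]; exact mul_le_of_le_one_right (norm_nonneg a) hξ
  calc 1 - ‖a‖ ≤ ‖(1 : ℂ)‖ - ‖conj a * ξ‖ := by rw [norm_one]; linarith
    _ ≤ ‖1 - conj a * ξ‖ := norm_sub_norm_le _ _

lemma poissonKernelDisk_le (ha : ‖a‖ < 1) (hξ : ‖ξ‖ ≤ 1) :
    poissonKernelDisk a ξ ≤ (1 - ‖a‖ ^ 2) / (1 - ‖a‖) ^ 2 := by
  have h := one_sub_norm_le_norm_one_sub_conj_mul (a := a) hξ
  exact div_le_div_of_nonneg_left (by nlinarith [norm_nonneg a]) (by nlinarith)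
    (pow_le_pow_left₀ (by linarith) h 2)

lemma measurable_poissonKernelDisk (a : ℂ) : Measurable (poissonKernelDisk a) := by
  unfold poissonKernelDisk; fun_prop

lemma integrable_poissonKernelDisk {ν : Measure ℂ} [IsFiniteMeasure ν]
    (hsupp : ν (closedBall 0 1)ᶜ = 0) (ha : ‖a‖ < 1) :
    Integrable (poissonKernelDisk a) ν := by
  refine .mono' (integrable_const ((1 - ‖a‖ ^ 2) / (1 - ‖a‖) ^ 2))
    (measurable_poissonKernelDisk a).aestronglyMeasurable ?_
  filter_upwards [(mem_ae_iff.2 hsupp : ∀ᵐ ξ ∂ν, ξ ∈ closedBall (0 : ℂ) 1)] with ξ hξ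
  rw [Real.norm_of_nonneg (poissonKernelDisk_nonneg ha.le ξ)]
  exact poissonKernelDisk_le ha (mem_closedBall_zero_iff.1 hξ)

lemma inv_le_poissonKernelDisk {r : ℝ} {w : ℂ} (hr0 : 0 ≤ r) (hr1 : r < 1) (hw : ‖w‖ = 1)
    (hξ : ‖ξ‖ ≤ 1) (hξw : ‖ξ - w‖ ≤ 1 - r) :
    (4 * (1 - r))⁻¹ ≤ poissonKernelDisk (r * w) ξ := by
  have hrw : ‖(r : ℂ) * w‖ = r := by simp [hw, abs_of_nonneg hr0]
  have hlower := one_sub_norm_le_norm_one_sub_conj_mul (a := r * w) hξ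
  rw [hrw] at hlower
  have hupper : ‖1 - conj ((r : ℂ) * w) * ξ‖ ≤ 2 * (1 - r) := by
    have hww : conj w * w = 1 := by
      rw [mul_comm, mul_conj, normSq_eq_norm_sq, hw]; simp
    calc ‖1 - conj ((r : ℂ) * w) * ξ‖ = ‖conj w * (w - ξ) + (1 - r) * (conj w * ξ)‖ := by
          rw [map_mul, conj_ofReal]; congr 1; linear_combination -hww
      _ ≤ ‖w - ξ‖ + (1 - r) := by
          refine (norm_add_le _ _).trans (add_le_add (by simp [hw]) ?_)
          rw [norm_mul, norm_mul, RCLike.norm_conj, hw, one_mul]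
          rw [← ofReal_one, ← ofReal_sub, norm_real, Real.norm_of_nonneg (by linarith)]
          exact mul_le_of_le_one_right (by linarith) hξ
      _ ≤ 2 * (1 - r) := by rw [norm_sub_rev]; linarith
  calc (4 * (1 - r))⁻¹ = (1 - r) / (2 * (1 - r)) ^ 2 := by
        field_simp [(by linarith : (1 - r) ≠ 0)]; ring
    _ ≤ poissonKernelDisk (r * w) ξ := by
        unfold poissonKernelDisk
        rw [hrw]
        exact div_le_div₀ (by nlinarith) (by nlinarith) (by nlinarith)
          (pow_le_pow_left₀ (by linarith) hupper 2)

end Kernel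

lemma measureReal_sphere_le_of_forall_integral_le {ν : Measure ℂ} [IsFiniteMeasure ν]
    (hsupp : ν (closedBall 0 1)ᶜ = 0) {r ε : ℝ} (hr0 : 0 ≤ r) (hr1 : r < 1)
    (h : ∀ a : ℂ, ‖a‖ = r → ∫ ξ, poissonKernelDisk a ξ ∂ν ≤ ε) :
    ν.real (sphere 0 1) ≤ 4 * (2 * π + 3) * ε := by
  set δ := 1 - r
  have hδ : 0 < δ := by simp only [δ]; linarith
  obtain ⟨S, hS, hScard, hScover⟩ := exists_finset_sphere_cover hδ
  have hnorm : ∀ w ∈ S, ‖(r : ℂ) * w‖ = r := fun w hw => by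
    simp [hS w hw, abs_of_nonneg hr0]
  have hint : ∀ w ∈ S, Integrable (poissonKernelDisk (r * w)) ν := fun w hw =>
    integrable_poissonKernelDisk hsupp ((hnorm w hw).trans_lt hr1)
  set g : ℂ → ℝ := fun ξ => ∑ w ∈ S, poissonKernelDisk (r * w) ξ
  have hg_nonneg : 0 ≤ g := fun ξ =>
    sum_nonneg fun w hw => poissonKernelDisk_nonneg ((hnorm w hw).le.trans hr1.le) ξ
  have hg_sphere : ∀ ξ ∈ sphere (0 : ℂ) 1, (4 * δ)⁻¹ ≤ g ξ := by
    intro ξ hξ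
    rw [mem_sphere_zero_iff_norm] at hξ
    obtain ⟨w, hw, hξw⟩ := hScover ξ hξ
    exact (inv_le_poissonKernelDisk hr0 hr1 (hS w hw) hξ.le hξw).trans <|
      single_le_sum (f := fun w => poissonKernelDisk (r * w) ξ)
        (fun w hw => poissonKernelDisk_nonneg ((hnorm w hw).le.trans hr1.le) ξ) hw
  have hε : 0 ≤ ε := by
    refine (integral_nonneg (poissonKernelDisk_nonneg (a := r) ?_)).trans (h r ?_) <;>
      simp [abs_of_nonneg hr0, hr1.le]
  calc ν.real (sphere 0 1) = 4 * δ * (ν.real (sphere 0 1) • (4 * δ)⁻¹) := by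
        rw [smul_eq_mul]; field_simp
    _ ≤ 4 * δ * ∫ ξ in sphere 0 1, g ξ ∂ν := by
        gcongr
        exact setIntegral_ge_of_const_le isClosed_sphere.measurableSet (measure_ne_top ν _)
          hg_sphere (integrable_finsetSum S hint).integrableOn
    _ ≤ 4 * δ * ∫ ξ, g ξ ∂ν := by
        gcongr 4 * δ * ?_
        exact setIntegral_le_integral (integrable_finsetSum S hint) (.of_forall hg_nonneg)
    _ = 4 * δ * ∑ w ∈ S, ∫ ξ, poissonKernelDisk (r * w) ξ ∂ν := by
        rw [integral_finsetSum S hint]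
    _ ≤ 4 * δ * (#S * ε) := by
        gcongr
        simpa using sum_le_card_nsmul S _ ε fun w hw => h _ (hnorm w hw)
    _ ≤ 4 * δ * ((2 * π / δ + 3) * ε) := by gcongr
    _ = 4 * (2 * π + 3 * δ) * ε := by field_simp
    _ ≤ 4 * (2 * π + 3) * ε := by gcongr; simp only [δ]; linarith

lemma exists_radius_of_eventually_toBoundary {p : ℂ → Prop} (h : ∀ᶠ a in toBoundary, p a) :
    ∃ r : ℝ, 0 ≤ r ∧ r < 1 ∧ ∀ a : ℂ, ‖a‖ = r → p a := by
  rw [toBoundary, eventually_comap] at h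
  obtain ⟨r, hp, hr⟩ := (h.and (Ioo_mem_nhdsLT zero_lt_one)).exists
  exact ⟨r, hr.1.le, hr.2, hp⟩

/-- If `ν` is a finite positive Borel measure supported in the closed unit disk and
`∫ (1 - |a|²)/|1 - conj(a)ξ|² dν(ξ) → 0` as `|a| → 1⁻`, then `ν(𝕋) = 0`. -/
theorem vanishing_poisson_integral_implies_null_circle (ν : Measure ℂ) [IsFiniteMeasure ν]
    (hsupp : ν ((Metric.closedBall (0:ℂ) 1)ᶜ) = 0)
    (hlim : Filter.Tendsto
      (fun a : ℂ =>
        ∫ ξ, (1 - ‖a‖ ^ 2) / ‖1 - (starRingEnd ℂ) a * ξ‖ ^ 2 ∂ν)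
      toBoundary (nhds 0)) :
    ν (Metric.sphere (0:ℂ) 1) = 0 := by
  have hC : 0 < 4 * (2 * π + 3) := by positivity
  have hbound : ∀ ε > 0, ν.real (sphere 0 1) ≤ 4 * (2 * π + 3) * ε := fun ε hε => by
    obtain ⟨r, hr0, hr1, hr⟩ :=
      exists_radius_of_eventually_toBoundary (hlim.eventually (ge_mem_nhds hε))
    exact measureReal_sphere_le_of_forall_integral_le hsupp hr0 hr1 hr
  have hnonpos : ν.real (sphere 0 1) ≤ 0 := le_of_forall_pos_le_add fun ε hε => by
    simpa [mul_div_cancel₀ ε hC.ne'] using hbound (ε / (4 * (2 * π + 3))) (by positivity)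
  exact (measureReal_eq_zero_iff).1 (hnonpos.antisymm measureReal_nonneg)
end

section
/- Let ψ be an analytic self-map of 𝔻 and let ψ* : 𝕋 → ℂ be a measurable function with |ψ*| ≤ 1 a.e. such that for m-a.e. ζ ∈ 𝕋 the radial limit lim_{r→1⁻} ψ(rζ) exists and equals ψ*(ζ). Define the induced measure μ_ψ on Borel subsets E of the closed unit disk by μ_ψ(E) := m({ζ ∈ 𝕋 : ψ*(ζ) ∈ E}). Then lim_{|a|→1⁻, a ∈ 𝔻} ∫_𝕋 (1 - |a|²)/|1 - conj(a)·ψ*(ζ)|² dm(ζ) = 0 if and only if μ_ψ(S(h, θ₀)) = o(h) uniformly in θ₀, i.e. for every ε > 0 there exists h₀ > 0 such that μ_ψ(S(h, θ₀)) ≤ ε·h for all 0 < h ≤ h₀ and all θ₀ ∈ [0, 2π). -/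
/-!
With `K_a(w) = (1 - |a|²) / |1 - ā w|²` the averaged quantity is `∫ K_a dμ_ψ`. For
`a = (1 - h) e^{iθ₀}` one has `K_a ≥ 1 / (5h)` on `S(h, θ₀)`, so `μ_ψ(S(h, θ₀)) ≤ 5h ∫ K_a dμ_ψ`.
Conversely, `|1 - ā w| ≥ t / π` for `|w| ≤ 1` outside `S(t, θ₀)`, so `K_a ≤ 8π² / (4ᵏ h)` on
`S(2ᵏ h, θ₀) \ S(2ᵏ⁻¹ h, θ₀)`. Summing over the dyadic windows until they cover the disk, the
windows of size at most `h₀` contribute `O(ε)` by the `o(h)` bound, and the larger ones only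
`O(h / h₀³)`.
-/

open MeasureTheory Filter Metric Complex

/-- The Carleson window `S(h, θ₀) = {r·e^{iθ} : 1 - h ≤ r ≤ 1, |θ - θ₀| ≤ h}`. -/
def carlesonWindow (h θ₀ : ℝ) : Set ℂ :=
  {z : ℂ | ∃ r θ : ℝ, 1 - h ≤ r ∧ r ≤ 1 ∧ |θ - θ₀| ≤ h ∧ z = r * Complex.exp (θ * Complex.I)}

/-- The average of `f` over the unit circle `𝕋` with respect to normalized
arclength measure `m`: `∫_𝕋 f dm = (2π)⁻¹ ∫_0^{2π} f(e^{iθ}) dθ`. -/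
noncomputable def circleAvg (f : ℂ → ℝ) : ℝ :=
  (2 * Real.pi)⁻¹ * ∫ θ in (0:ℝ)..(2 * Real.pi), f (Complex.exp (θ * Complex.I))

/-- The induced measure `μ_ψ(E) = m({ζ ∈ 𝕋 : ψ*(ζ) ∈ E})` of a boundary-value
function `ψs : 𝕋 → ℂ`, realized as the pushforward of normalized arclength measure
on `[0, 2π)` under `θ ↦ ψ*(e^{iθ})`. -/
noncomputable def inducedMeasure (ψs : ℂ → ℂ) : Measure ℂ :=
  Measure.map (fun θ : ℝ => ψs (Complex.exp (θ * Complex.I)))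
    ((ENNReal.ofReal (2 * Real.pi))⁻¹ • volume.restrict (Set.Ioc (0:ℝ) (2 * Real.pi)))

open scoped Real Topology

-- `|k_a(w)|² / ‖k_a‖²` for the Szegő kernel `k_a(w) = (1 - ā w)⁻¹` of `H²`; on `𝕋` it is the
-- Poisson kernel of `𝔻` at `a`.
noncomputable def berezinKernel (a w : ℂ) : ℝ :=
  (1 - ‖a‖ ^ 2) / ‖1 - (starRingEnd ℂ) a * w‖ ^ 2

section BerezinKernel

variable {a w : ℂ}

lemma measurable_berezinKernel (a : ℂ) : Measurable (berezinKernel a) := by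
  unfold berezinKernel
  fun_prop

lemma berezinKernel_nonneg (ha : ‖a‖ ≤ 1) (w : ℂ) : 0 ≤ berezinKernel a w :=
  div_nonneg (by nlinarith [norm_nonneg a]) (by positivity)

lemma one_sub_norm_mul_norm_le_norm_one_sub (a w : ℂ) :
    1 - ‖a‖ * ‖w‖ ≤ ‖1 - (starRingEnd ℂ) a * w‖ := by
  simpa using norm_sub_norm_le (1 : ℂ) ((starRingEnd ℂ) a * w)

lemma berezinKernel_le_of_le_norm {d : ℝ} (ha : ‖a‖ ≤ 1) (hd : 0 < d)
    (hdw : d ≤ ‖1 - (starRingEnd ℂ) a * w‖) :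
    berezinKernel a w ≤ 2 * (1 - ‖a‖) / d ^ 2 :=
  div_le_div₀ (by linarith) (by nlinarith [norm_nonneg a]) (by positivity)
    (pow_le_pow_left₀ hd.le hdw 2)

lemma berezinKernel_le_of_norm_le_one (ha : ‖a‖ < 1) (hw : ‖w‖ ≤ 1) :
    berezinKernel a w ≤ 2 / (1 - ‖a‖) := by
  have hd : 1 - ‖a‖ ≤ ‖1 - (starRingEnd ℂ) a * w‖ :=
    le_trans (by nlinarith [norm_nonneg a]) (one_sub_norm_mul_norm_le_norm_one_sub a w)
  calc berezinKernel a w ≤ 2 * (1 - ‖a‖) / (1 - ‖a‖) ^ 2 :=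
        berezinKernel_le_of_le_norm ha.le (sub_pos.2 ha) hd
    _ = 2 / (1 - ‖a‖) := by
        have : 1 - ‖a‖ ≠ 0 := (sub_pos.2 ha).ne'
        field_simp

lemma integrable_berezinKernel {μ : Measure ℂ} [IsFiniteMeasure μ] (hμ : ∀ᵐ w ∂μ, ‖w‖ ≤ 1)
    (ha : ‖a‖ < 1) : Integrable (berezinKernel a) μ := by
  refine Integrable.mono' (integrable_const (2 / (1 - ‖a‖)))
    (measurable_berezinKernel a).aestronglyMeasurable ?_
  filter_upwards [hμ] with w hw
  rw [Real.norm_of_nonneg (berezinKernel_nonneg ha.le w)]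
  exact berezinKernel_le_of_norm_le_one ha hw

end BerezinKernel

section Polar

lemma norm_ofReal_mul_exp_mul_I {r : ℝ} (hr : 0 ≤ r) (θ : ℝ) : ‖(r : ℂ) * exp (θ * I)‖ = r := by
  rw [norm_mul, norm_exp_ofReal_mul_I, mul_one, norm_real, Real.norm_of_nonneg hr]

lemma conj_ofReal_mul_exp_mul_ofReal_mul_exp (r s α β : ℝ) :
    (starRingEnd ℂ) (r * exp (α * I)) * (s * exp (β * I)) =
      ((r * s : ℝ) : ℂ) * exp ((β - α : ℝ) * I) := by
  rw [map_mul, conj_ofReal, ← exp_conj, map_mul, conj_ofReal, conj_I]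
  push_cast
  rw [show ((β : ℂ) - α) * I = α * -I + β * I by ring, exp_add]
  ring

lemma norm_one_sub_ofReal_mul_exp_sq (ρ φ : ℝ) :
    ‖1 - (ρ : ℂ) * exp (φ * I)‖ ^ 2 = (1 - ρ) ^ 2 + 2 * ρ * (1 - Real.cos φ) := by
  rw [Complex.sq_norm, normSq_apply]
  simp only [sub_re, one_re, re_ofReal_mul, exp_ofReal_mul_I_re, sub_im, one_im, im_ofReal_mul,
    exp_ofReal_mul_I_im]
  linear_combination ρ ^ 2 * Real.sin_sq_add_cos_sq φ

lemma norm_one_sub_ofReal_mul_exp_sq_le {ρ : ℝ} (hρ : 0 ≤ ρ) (φ : ℝ) :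
    ‖1 - (ρ : ℂ) * exp (φ * I)‖ ^ 2 ≤ (1 - ρ) ^ 2 + ρ * φ ^ 2 := by
  rw [norm_one_sub_ofReal_mul_exp_sq]
  nlinarith [Real.one_sub_sq_div_two_le_cos (x := φ)]

lemma abs_div_pi_le_norm_one_sub_ofReal_mul_exp {ρ φ : ℝ} (hρ : 0 ≤ ρ) (hφ : |φ| ≤ π) :
    |φ| / π ≤ ‖1 - (ρ : ℂ) * exp (φ * I)‖ := by
  have hπ : 0 < π ^ 2 := by positivity
  have hφ2 : φ ^ 2 / π ^ 2 ≤ 1 := by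
    rw [div_le_one hπ, ← sq_abs, ← sq_abs π]
    exact pow_le_pow_left₀ (abs_nonneg φ) (hφ.trans (le_abs_self π)) 2
  have hcos : φ ^ 2 / π ^ 2 ≤ 1 - Real.cos φ := by
    have := Real.cos_le_one_sub_mul_cos_sq hφ
    have : 2 / π ^ 2 * φ ^ 2 = 2 * (φ ^ 2 / π ^ 2) := by ring
    nlinarith [div_nonneg (sq_nonneg φ) hπ.le]
  have hsq : (|φ| / π) ^ 2 ≤ ‖1 - (ρ : ℂ) * exp (φ * I)‖ ^ 2 := by
    rw [div_pow, sq_abs, norm_one_sub_ofReal_mul_exp_sq]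
    -- the right side is `(ρ - cos φ)² + sin² φ`, at least `1 - cos φ` if `cos φ ≥ 0` and `1` if not
    rcases le_total 0 (Real.cos φ) with hc | hc
    · nlinarith [Real.cos_le_one φ, sq_nonneg (ρ - Real.cos φ)]
    · nlinarith
  exact (pow_le_pow_iff_left₀ (by positivity) (norm_nonneg _) two_ne_zero).1 hsq

lemma exists_mem_Ico_norm_mul_exp_eq (w : ℂ) (c : ℝ) :
    ∃ θ ∈ Set.Ico c (c + 2 * π), (‖w‖ : ℂ) * exp (θ * I) = w := by
  refine ⟨toIcoMod Real.two_pi_pos c (arg w), toIcoMod_mem_Ico _ _ _, ?_⟩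
  rw [toIcoMod, ofReal_sub, ofReal_zsmul, ofReal_mul, ofReal_ofNat, exp_mul_I_periodic.sub_zsmul_eq,
    norm_mul_exp_arg_mul_I]

end Polar

section CarlesonWindow

variable {h t θ₀ : ℝ} {w : ℂ}

noncomputable def carlesonPoint (h θ₀ : ℝ) : ℂ :=
  ((1 - h : ℝ) : ℂ) * exp (θ₀ * I)

lemma norm_carlesonPoint (hh1 : h ≤ 1) (θ₀ : ℝ) : ‖carlesonPoint h θ₀‖ = 1 - h :=
  norm_ofReal_mul_exp_mul_I (by linarith) θ₀

lemma isCompact_carlesonWindow (h θ₀ : ℝ) : IsCompact (carlesonWindow h θ₀) := by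
  have : carlesonWindow h θ₀ = (fun p : ℝ × ℝ => (p.1 : ℂ) * exp (p.2 * I)) ''
      (Set.Icc (1 - h) 1 ×ˢ Set.Icc (θ₀ - h) (θ₀ + h)) := by
    ext z
    simp only [carlesonWindow, abs_le, Set.mem_ofPred_eq, Set.mem_image, Set.mem_prod, Set.mem_Icc,
      Prod.exists, sub_le_iff_le_add, neg_le_sub_iff_le_add]
    constructor
    · rintro ⟨r, θ, h₁, h₂, ⟨h₃, h₄⟩, rfl⟩
      exact ⟨r, θ, ⟨⟨h₁, h₂⟩, by linarith, by linarith⟩, rfl⟩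
    · rintro ⟨r, θ, ⟨⟨h₁, h₂⟩, h₃, h₄⟩, rfl⟩
      exact ⟨r, θ, h₁, h₂, ⟨by linarith, by linarith⟩, rfl⟩
  rw [this]
  exact (isCompact_Icc.prod isCompact_Icc).image (by fun_prop)

lemma measurableSet_carlesonWindow (h θ₀ : ℝ) : MeasurableSet (carlesonWindow h θ₀) :=
  (isCompact_carlesonWindow h θ₀).isClosed.measurableSet

lemma closedBall_subset_carlesonWindow (ht : π ≤ t) (θ₀ : ℝ) :
    closedBall (0 : ℂ) 1 ⊆ carlesonWindow t θ₀ := by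
  intro w hw
  rw [mem_closedBall_zero_iff] at hw
  obtain ⟨θ, ⟨hθ₁, hθ₂⟩, hθ⟩ := exists_mem_Ico_norm_mul_exp_eq w (θ₀ - π)
  exact ⟨‖w‖, θ, by linarith [norm_nonneg w, Real.pi_gt_three], hw,
    abs_le.2 ⟨by linarith, by linarith⟩, hθ.symm⟩

lemma inv_le_berezinKernel_of_mem_carlesonWindow (hh : 0 < h) (hh1 : h ≤ 1)
    (hw : w ∈ carlesonWindow h θ₀) : (5 * h)⁻¹ ≤ berezinKernel (carlesonPoint h θ₀) w := by
  obtain ⟨r, θ, hr₁, hr₂, hθ, rfl⟩ := hw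
  rw [berezinKernel, norm_carlesonPoint hh1, carlesonPoint, conj_ofReal_mul_exp_mul_ofReal_mul_exp]
  set ρ := (1 - h) * r
  have hρ : 0 ≤ ρ := mul_nonneg (by linarith) (by linarith)
  have hρ₁ : 1 - ρ ≤ 2 * h := by nlinarith
  have hρ₂ : h ≤ 1 - ρ := by nlinarith
  have hφ : (θ - θ₀) ^ 2 ≤ h ^ 2 := sq_le_sq' (abs_le.1 hθ).1 (abs_le.1 hθ).2
  have hup : ‖1 - (ρ : ℂ) * exp ((θ - θ₀ : ℝ) * I)‖ ^ 2 ≤ 5 * h ^ 2 := by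
    nlinarith [norm_one_sub_ofReal_mul_exp_sq_le hρ (θ - θ₀)]
  have hpos : 0 < ‖1 - (ρ : ℂ) * exp ((θ - θ₀ : ℝ) * I)‖ ^ 2 := by
    rw [norm_one_sub_ofReal_mul_exp_sq]
    nlinarith [Real.cos_le_one (θ - θ₀)]
  calc (5 * h)⁻¹ = h / (5 * h ^ 2) := by field_simp
    _ ≤ (1 - (1 - h) ^ 2) / ‖1 - (ρ : ℂ) * exp ((θ - θ₀ : ℝ) * I)‖ ^ 2 :=
        div_le_div₀ (by nlinarith) (by nlinarith) hpos hup

lemma div_pi_le_norm_one_sub_of_notMem_carlesonWindow {r : ℝ} (hr₀ : 0 ≤ r) (hr₁ : r ≤ 1)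
    (hw : ‖w‖ ≤ 1) (ht : 0 ≤ t) (hnot : w ∉ carlesonWindow t θ₀) :
    t / π ≤ ‖1 - (starRingEnd ℂ) ((r : ℂ) * exp (θ₀ * I)) * w‖ := by
  by_cases hnear : 1 - t ≤ ‖w‖
  · obtain ⟨θ, ⟨hθ₁, hθ₂⟩, hθ⟩ := exists_mem_Ico_norm_mul_exp_eq w (θ₀ - π)
    have hangle : t < |θ - θ₀| := by
      by_contra! hle
      exact hnot ⟨‖w‖, θ, hnear, hw, hle, hθ.symm⟩
    rw [← hθ, conj_ofReal_mul_exp_mul_ofReal_mul_exp]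
    calc t / π ≤ |θ - θ₀| / π := by gcongr
      _ ≤ _ := abs_div_pi_le_norm_one_sub_ofReal_mul_exp (by positivity)
          (abs_le.2 ⟨by linarith, by linarith⟩)
  · push Not at hnear
    have := one_sub_norm_mul_norm_le_norm_one_sub ((r : ℂ) * exp (θ₀ * I)) w
    rw [norm_ofReal_mul_exp_mul_I hr₀] at this
    calc t / π ≤ t := div_le_self ht (by linarith [Real.pi_gt_three])
      _ ≤ 1 - r * ‖w‖ := by nlinarith [norm_nonneg w]
      _ ≤ _ := this

lemma berezinKernel_le_of_notMem_carlesonWindow {r : ℝ} (hr₀ : 0 ≤ r) (hr₁ : r ≤ 1)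
    (hw : ‖w‖ ≤ 1) (ht : 0 < t) (hnot : w ∉ carlesonWindow t θ₀) :
    berezinKernel ((r : ℂ) * exp (θ₀ * I)) w ≤ 2 * π ^ 2 * (1 - r) / t ^ 2 := by
  have ha : ‖(r : ℂ) * exp (θ₀ * I)‖ = r := norm_ofReal_mul_exp_mul_I hr₀ θ₀
  have := berezinKernel_le_of_le_norm (ha.trans_le hr₁) (by positivity)
    (div_pi_le_norm_one_sub_of_notMem_carlesonWindow hr₀ hr₁ hw ht.le hnot)
  rw [ha] at this
  calc _ ≤ _ := this
    _ = _ := by field_simp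

end CarlesonWindow

section Dyadic

open Finset

lemma sum_div_four_pow_mul_le {f : ℕ → ℝ} {ε M h h₀ : ℝ} (hε : 0 ≤ ε) (hM : 0 ≤ M) (hh : 0 < h)
    (hh₀ : 0 < h₀) (hnear : ∀ k : ℕ, 2 ^ k * h ≤ h₀ → f k ≤ ε * (2 ^ k * h))
    (hfar : ∀ k, f k ≤ M) (N : ℕ) :
    ∑ k ∈ range N, f k / (4 ^ k * h) ≤ 2 * ε + 2 ^ N * M * h ^ 2 / h₀ ^ 3 := by
  have hterm : ∀ k, f k / (4 ^ k * h) ≤ ε * (1 / 2) ^ k + M * h ^ 2 / h₀ ^ 3 * 2 ^ k := by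
    intro k
    have h4 : (4 : ℝ) ^ k = 2 ^ k * 2 ^ k := by rw [← mul_pow]; norm_num
    rcases le_or_gt (2 ^ k * h) h₀ with hk | hk
    · calc f k / (4 ^ k * h) ≤ ε * (2 ^ k * h) / (4 ^ k * h) := by gcongr; exact hnear k hk
        _ = ε * (1 / 2) ^ k := by rw [h4, one_div, inv_pow]; field_simp
        _ ≤ _ := le_add_of_nonneg_right (by positivity)
    -- only `f k ≤ M` is known here; `(2ᵏ h / h₀)³ ≥ 1` makes the weights a geometric series
    · calc f k / (4 ^ k * h) ≤ M / (4 ^ k * h) := by gcongr; exact hfar k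
        _ = M * h ^ 2 / (2 ^ k * h) ^ 3 * 2 ^ k := by rw [h4]; field_simp
        _ ≤ M * h ^ 2 / h₀ ^ 3 * 2 ^ k := by gcongr
        _ ≤ _ := le_add_of_nonneg_left (by positivity)
  calc ∑ k ∈ range N, f k / (4 ^ k * h)
      ≤ ∑ k ∈ range N, (ε * (1 / 2) ^ k + M * h ^ 2 / h₀ ^ 3 * 2 ^ k) :=
        sum_le_sum fun k _ => hterm k
    _ = ε * ∑ k ∈ range N, (1 / 2 : ℝ) ^ k + M * h ^ 2 / h₀ ^ 3 * ∑ k ∈ range N, (2 : ℝ) ^ k := by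
        rw [sum_add_distrib, mul_sum, mul_sum]
    _ ≤ ε * 2 + M * h ^ 2 / h₀ ^ 3 * 2 ^ N := by
        gcongr
        · exact sum_geometric_two_le N
        · rw [geom_sum_eq (by norm_num : (2 : ℝ) ≠ 1)]
          norm_num
    _ = _ := by ring

variable {h θ₀ : ℝ} {w : ℂ}

lemma berezinKernel_le_sum_indicator (hh : 0 < h) (hh1 : h ≤ 1) (hw : ‖w‖ ≤ 1) (N : ℕ)
    (hN : w ∈ carlesonWindow (2 ^ N * h) θ₀) :
    berezinKernel (carlesonPoint h θ₀) w ≤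
      8 * π ^ 2 * ∑ k ∈ range (N + 1),
        (carlesonWindow (2 ^ k * h) θ₀).indicator (fun _ => (4 ^ k * h)⁻¹) w := by
  have hterm : ∀ k : ℕ, 0 ≤ (carlesonWindow (2 ^ k * h) θ₀).indicator (fun _ => (4 ^ k * h)⁻¹) w :=
    fun k => Set.indicator_nonneg (fun _ _ => by positivity) w
  induction N with
  | zero =>
    have ha := norm_carlesonPoint hh1 θ₀
    have := berezinKernel_le_of_norm_le_one (by rw [ha]; linarith) hw
    rw [ha, sub_sub_cancel] at this
    simp only [zero_add, sum_range_one, pow_zero, one_mul] at hN ⊢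
    rw [Set.indicator_of_mem hN, ← div_eq_mul_inv]
    calc _ ≤ 2 / h := this
      _ ≤ 8 * π ^ 2 / h := by gcongr; nlinarith [Real.pi_gt_three]
  | succ N ih =>
    rw [sum_range_succ, mul_add]
    by_cases hmem : w ∈ carlesonWindow (2 ^ N * h) θ₀
    · nlinarith [ih hmem, hterm (N + 1), Real.pi_pos]
    · have hsum := sum_nonneg fun k (_ : k ∈ range (N + 1)) => hterm k
      rw [Set.indicator_of_mem hN]
      calc _ ≤ 2 * π ^ 2 * (1 - (1 - h)) / (2 ^ N * h) ^ 2 :=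
            berezinKernel_le_of_notMem_carlesonWindow (by linarith) (by linarith) hw (by positivity)
              hmem
        _ = 8 * π ^ 2 * (4 ^ (N + 1) * h)⁻¹ := by
            rw [show (4 : ℝ) ^ (N + 1) = 4 * (2 ^ N) ^ 2 by
              rw [← pow_mul, pow_succ, mul_comm N 2, pow_mul]; norm_num; ring]
            field_simp
            ring
        _ ≤ _ := le_add_of_nonneg_left (by positivity)

end Dyadic

section Integral

variable {μ : Measure ℂ} [IsFiniteMeasure μ] {h θ₀ : ℝ}

lemma measureReal_carlesonWindow_le_mul_integral (hμ : ∀ᵐ w ∂μ, ‖w‖ ≤ 1) (hh : 0 < h)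
    (hh1 : h ≤ 1) :
    μ.real (carlesonWindow h θ₀) ≤ 5 * h * ∫ w, berezinKernel (carlesonPoint h θ₀) w ∂μ := by
  have ha := norm_carlesonPoint hh1 θ₀
  have hmarkov := mul_meas_ge_le_integral_of_nonneg
    (Eventually.of_forall (berezinKernel_nonneg (by rw [ha]; linarith)))
    (integrable_berezinKernel hμ (by rw [ha]; linarith)) (5 * h)⁻¹
  have hsub : carlesonWindow h θ₀ ⊆ {w | (5 * h)⁻¹ ≤ berezinKernel (carlesonPoint h θ₀) w} :=
    fun w hw => inv_le_berezinKernel_of_mem_carlesonWindow hh hh1 hw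
  calc μ.real (carlesonWindow h θ₀) = 5 * h * ((5 * h)⁻¹ * μ.real (carlesonWindow h θ₀)) := by
        field_simp
    _ ≤ _ := by
        gcongr
        exact (mul_le_mul_of_nonneg_left (measureReal_mono hsub) (by positivity)).trans hmarkov

lemma integral_berezinKernel_le_sum (hμ : ∀ᵐ w ∂μ, ‖w‖ ≤ 1) (hh : 0 < h) (hh1 : h ≤ 1) (N : ℕ)
    (hN : π ≤ 2 ^ N * h) :
    ∫ w, berezinKernel (carlesonPoint h θ₀) w ∂μ ≤
      8 * π ^ 2 * ∑ k ∈ Finset.range (N + 1),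
        μ.real (carlesonWindow (2 ^ k * h) θ₀) / (4 ^ k * h) := by
  have hind : ∀ k : ℕ, Integrable
      ((carlesonWindow (2 ^ k * h) θ₀).indicator fun _ => (4 ^ k * h)⁻¹) μ :=
    fun k => (integrable_const _).indicator (measurableSet_carlesonWindow _ _)
  have ha := norm_carlesonPoint hh1 θ₀
  calc ∫ w, berezinKernel (carlesonPoint h θ₀) w ∂μ
      ≤ ∫ w, 8 * π ^ 2 * ∑ k ∈ Finset.range (N + 1),
          (carlesonWindow (2 ^ k * h) θ₀).indicator (fun _ => (4 ^ k * h)⁻¹) w ∂μ := by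
        refine integral_mono_ae (integrable_berezinKernel hμ (by rw [ha]; linarith))
          ((integrable_finsetSum _ fun k _ => hind k).const_mul _) ?_
        filter_upwards [hμ] with w hw
        exact berezinKernel_le_sum_indicator hh hh1 hw N
          (closedBall_subset_carlesonWindow hN θ₀ (mem_closedBall_zero_iff.2 hw))
    _ = _ := by
        rw [integral_const_mul, integral_finsetSum _ fun k _ => hind k]
        simp only [integral_indicator_const _ (measurableSet_carlesonWindow _ _), smul_eq_mul,
          div_eq_mul_inv]

lemma integral_berezinKernel_le_of_measureReal_le (hμ : ∀ᵐ w ∂μ, ‖w‖ ≤ 1) {ε h₀ : ℝ}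
    (hh₀ : 0 < h₀) (hcar : ∀ t, 0 < t → t ≤ h₀ → μ.real (carlesonWindow t θ₀) ≤ ε * t)
    (hh : 0 < h) (hh1 : h ≤ 1) :
    ∫ w, berezinKernel (carlesonPoint h θ₀) w ∂μ ≤
      16 * π ^ 2 * ε + 32 * π ^ 3 * μ.real Set.univ * h / h₀ ^ 3 := by
  have hε : 0 ≤ ε := nonneg_of_mul_nonneg_left (measureReal_nonneg.trans (hcar h₀ hh₀ le_rfl)) hh₀
  obtain ⟨n, hn₁, hn₂⟩ := exists_nat_pow_near
    ((one_le_div hh).2 (show h ≤ π by linarith [Real.pi_gt_three])) one_lt_two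
  rw [le_div_iff₀ hh] at hn₁
  rw [div_lt_iff₀ hh] at hn₂
  have hsum := sum_div_four_pow_mul_le hε measureReal_nonneg hh hh₀
    (fun k hk => hcar _ (by positivity) hk) (fun k => measureReal_mono (Set.subset_univ _)) (n + 2)
  have htail : 2 ^ (n + 2) * μ.real Set.univ * h ^ 2 ≤ 4 * π * μ.real Set.univ * h := by
    have : 2 ^ (n + 2) * μ.real Set.univ * h ^ 2 = 4 * (2 ^ n * h) * μ.real Set.univ * h := by ring
    rw [this]
    gcongr
  calc ∫ w, berezinKernel (carlesonPoint h θ₀) w ∂μ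
      ≤ 8 * π ^ 2 * ∑ k ∈ Finset.range (n + 2),
          μ.real (carlesonWindow (2 ^ k * h) θ₀) / (4 ^ k * h) :=
        integral_berezinKernel_le_sum hμ hh hh1 (n + 1) hn₂.le
    _ ≤ 8 * π ^ 2 * (2 * ε + 4 * π * μ.real Set.univ * h / h₀ ^ 3) := by
        gcongr
        exact hsum.trans (by gcongr)
    _ = _ := by ring

end Integral

def IsVanishingCarlesonMeasure (μ : Measure ℂ) : Prop :=
  ∀ ε > 0, ∃ h₀ > 0, ∀ h : ℝ, 0 < h → h ≤ h₀ →
    ∀ θ₀ : ℝ, 0 ≤ θ₀ → θ₀ < 2 * π → μ (carlesonWindow h θ₀) ≤ ENNReal.ofReal (ε * h)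

lemma eventually_toBoundary_iff {p : ℂ → Prop} :
    (∀ᶠ a in toBoundary, p a) ↔ ∃ δ > 0, ∀ a : ℂ, 1 - δ < ‖a‖ → ‖a‖ < 1 → p a := by
  rw [toBoundary, ((nhdsLT_basis (1 : ℝ)).comap _).eventually_iff]
  constructor
  · rintro ⟨l, hl, hp⟩
    exact ⟨1 - l, by linarith, fun a h₁ h₂ => hp ⟨by linarith, h₂⟩⟩
  · rintro ⟨δ, hδ, hp⟩
    exact ⟨1 - δ, by linarith, fun a ha => hp a ha.1 ha.2⟩

section Equivalence

variable {μ : Measure ℂ} [IsFiniteMeasure μ]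

lemma isVanishingCarlesonMeasure_of_tendsto (hμ : ∀ᵐ w ∂μ, ‖w‖ ≤ 1)
    (hlim : Tendsto (fun a => ∫ w, berezinKernel a w ∂μ) toBoundary (𝓝 0)) :
    IsVanishingCarlesonMeasure μ := by
  intro ε hε
  obtain ⟨δ, hδ, hsmall⟩ :=
    eventually_toBoundary_iff.1 (hlim.eventually (gt_mem_nhds (show (0 : ℝ) < ε / 5 by positivity)))
  refine ⟨min (δ / 2) 1, by positivity, fun h hh hhδ θ₀ _ _ => ?_⟩
  have hh1 : h ≤ 1 := hhδ.trans (min_le_right _ _)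
  have ha := norm_carlesonPoint hh1 θ₀
  have hint := hsmall _ (by rw [ha]; linarith [min_le_left (δ / 2) 1]) (by rw [ha]; linarith)
  rw [← ofReal_measureReal]
  gcongr
  calc μ.real (carlesonWindow h θ₀)
      ≤ 5 * h * ∫ w, berezinKernel (carlesonPoint h θ₀) w ∂μ :=
        measureReal_carlesonWindow_le_mul_integral hμ hh hh1
    _ ≤ 5 * h * (ε / 5) := by gcongr
    _ = ε * h := by ring

lemma tendsto_of_isVanishingCarlesonMeasure (hμ : ∀ᵐ w ∂μ, ‖w‖ ≤ 1)
    (hμc : IsVanishingCarlesonMeasure μ) :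
    Tendsto (fun a => ∫ w, berezinKernel a w ∂μ) toBoundary (𝓝 0) := by
  have hnonneg : ∀ᶠ a in toBoundary, 0 ≤ ∫ w, berezinKernel a w ∂μ :=
    eventually_toBoundary_iff.2
      ⟨1, one_pos, fun a _ ha => integral_nonneg (berezinKernel_nonneg ha.le)⟩
  refine tendsto_order.2 ⟨fun b hb => hnonneg.mono fun a ha => hb.trans_le ha, fun ε hε => ?_⟩
  obtain ⟨h₀, hh₀, hcar⟩ := hμc (ε / (32 * π ^ 2)) (by positivity)
  have hbound : ∀ᶠ h in 𝓝 (0 : ℝ),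
      16 * π ^ 2 * (ε / (32 * π ^ 2)) + 32 * π ^ 3 * μ.real Set.univ * h / h₀ ^ 3 < ε := by
    refine (Continuous.continuousAt (by fun_prop)).eventually_lt continuousAt_const ?_
    rw [mul_zero, zero_div, add_zero]
    field_simp
    linarith
  obtain ⟨δ, hδ, hδε⟩ := Metric.eventually_nhds_iff.1 hbound
  refine eventually_toBoundary_iff.2 ⟨min δ 1, by positivity, fun a ha₁ ha₂ => ?_⟩
  obtain ⟨θ₀, ⟨hθ₁, hθ₂⟩, hθ⟩ := exists_mem_Ico_norm_mul_exp_eq a 0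
  have hh : 0 < 1 - ‖a‖ := by linarith
  have hhδ : dist (1 - ‖a‖) 0 < δ := by
    rw [Real.dist_0_eq_abs, abs_of_pos hh]
    linarith [min_le_left δ 1]
  have := integral_berezinKernel_le_of_measureReal_le hμ hh₀
    (fun t ht hth₀ => ENNReal.toReal_le_of_le_ofReal (by positivity)
      (hcar t ht hth₀ θ₀ hθ₁ (by linarith)))
    hh (by linarith [norm_nonneg a])
  rw [carlesonPoint, sub_sub_cancel, hθ] at this
  exact this.trans_lt (hδε hhδ)

theorem tendsto_integral_berezinKernel_toBoundary_iff (hμ : ∀ᵐ w ∂μ, ‖w‖ ≤ 1) :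
    Tendsto (fun a => ∫ w, berezinKernel a w ∂μ) toBoundary (𝓝 0) ↔ IsVanishingCarlesonMeasure μ :=
  ⟨isVanishingCarlesonMeasure_of_tendsto hμ, tendsto_of_isVanishingCarlesonMeasure hμ⟩

end Equivalence

section InducedMeasure

variable {ψs : ℂ → ℂ}

lemma measurable_comp_exp_mul_I (hmeas : Measurable ψs) :
    Measurable fun θ : ℝ => ψs (exp (θ * I)) :=
  hmeas.comp (by fun_prop)

lemma isProbabilityMeasure_inducedMeasure (hmeas : Measurable ψs) :
    IsProbabilityMeasure (inducedMeasure ψs) := by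
  have : IsProbabilityMeasure
      ((ENNReal.ofReal (2 * π))⁻¹ • volume.restrict (Set.Ioc (0 : ℝ) (2 * π))) :=
    ⟨by
      simp only [Measure.smul_apply, Measure.restrict_apply_univ, Real.volume_Ioc, sub_zero,
        smul_eq_mul]
      exact ENNReal.inv_mul_cancel (by positivity) (by finiteness)⟩
  exact Measure.isProbabilityMeasure_map (measurable_comp_exp_mul_I hmeas).aemeasurable

lemma ae_norm_le_one_inducedMeasure (hmeas : Measurable ψs)
    (hmod : ∀ᵐ (θ : ℝ) ∂(volume.restrict (Set.Ioc (0 : ℝ) (2 * π))), ‖ψs (exp (θ * I))‖ ≤ 1) :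
    ∀ᵐ w ∂inducedMeasure ψs, ‖w‖ ≤ 1 :=
  (ae_map_iff (measurable_comp_exp_mul_I hmeas).aemeasurable
    (isClosed_le continuous_norm continuous_const).measurableSet).2 (Measure.ae_smul_measure hmod _)

lemma circleAvg_comp_eq_integral_inducedMeasure (hmeas : Measurable ψs) {f : ℂ → ℝ}
    (hf : Measurable f) : circleAvg (f ∘ ψs) = ∫ w, f w ∂inducedMeasure ψs := by
  rw [inducedMeasure,
    integral_map (measurable_comp_exp_mul_I hmeas).aemeasurable hf.aestronglyMeasurable,
    integral_smul_measure, circleAvg, intervalIntegral.integral_of_le (by positivity),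
    ENNReal.toReal_inv, ENNReal.toReal_ofReal (by positivity), smul_eq_mul]
  rfl

end InducedMeasure

theorem compact_iff_induced_measure_little_o_general (ψs : ℂ → ℂ)
    (hmeas : Measurable ψs)
    (hmod : ∀ᵐ (θ : ℝ) ∂(volume.restrict (Set.Ioc (0:ℝ) (2 * Real.pi))),
      ‖ψs (Complex.exp (θ * Complex.I))‖ ≤ 1) :
    Filter.Tendsto
        (fun a : ℂ => circleAvg (fun ζ =>
          (1 - ‖a‖ ^ 2) / ‖1 - (starRingEnd ℂ) a * ψs ζ‖ ^ 2))
        toBoundary (nhds 0)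
      ↔ ∀ ε > 0, ∃ h₀ > 0, ∀ h : ℝ, 0 < h → h ≤ h₀ →
          ∀ θ₀ : ℝ, 0 ≤ θ₀ → θ₀ < 2 * Real.pi →
            inducedMeasure ψs (carlesonWindow h θ₀) ≤ ENNReal.ofReal (ε * h) := by
  have := isProbabilityMeasure_inducedMeasure hmeas
  have hcircle :
      ∀ a, circleAvg (berezinKernel a ∘ ψs) = ∫ w, berezinKernel a w ∂inducedMeasure ψs :=
    fun a => circleAvg_comp_eq_integral_inducedMeasure hmeas (measurable_berezinKernel a)
  change Tendsto (fun a => circleAvg (berezinKernel a ∘ ψs)) _ _ ↔ IsVanishingCarlesonMeasure _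
  simp only [hcircle]
  exact tendsto_integral_berezinKernel_toBoundary_iff (ae_norm_le_one_inducedMeasure hmeas hmod)

/-- For an analytic self-map `ψ` of `𝔻` with boundary-value function `ψs`:
`∫_𝕋 (1-|a|²)/|1 - conj(a)ψ*(ζ)|² dm(ζ) → 0` as `|a| → 1⁻` if and only if
`μ_ψ(S(h, θ₀)) = o(h)` uniformly in `θ₀`. -/
theorem compact_iff_induced_measure_little_o (ψ ψs : ℂ → ℂ)
    (hψ : DifferentiableOn ℂ ψ (Metric.ball (0:ℂ) 1))
    (hmaps : Set.MapsTo ψ (Metric.ball (0:ℂ) 1) (Metric.ball (0:ℂ) 1))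
    (hmeas : Measurable ψs)
    (hmod : ∀ᵐ (θ : ℝ) ∂(volume.restrict (Set.Ioc (0:ℝ) (2 * Real.pi))),
      ‖ψs (Complex.exp (θ * Complex.I))‖ ≤ 1)
    (hrad : ∀ᵐ (θ : ℝ) ∂(volume.restrict (Set.Ioc (0:ℝ) (2 * Real.pi))),
      Filter.Tendsto (fun r : ℝ => ψ (r * Complex.exp (θ * Complex.I)))
        (nhdsWithin 1 (Set.Iio 1)) (nhds (ψs (Complex.exp (θ * Complex.I))))) :
    Filter.Tendsto
        (fun a : ℂ => circleAvg (fun ζ =>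
          (1 - ‖a‖ ^ 2) / ‖1 - (starRingEnd ℂ) a * ψs ζ‖ ^ 2))
        toBoundary (nhds 0)
      ↔ ∀ ε > 0, ∃ h₀ > 0, ∀ h : ℝ, 0 < h → h ≤ h₀ →
          ∀ θ₀ : ℝ, 0 ≤ θ₀ → θ₀ < 2 * Real.pi →
            inducedMeasure ψs (carlesonWindow h θ₀) ≤ ENNReal.ofReal (ε * h) :=
  compact_iff_induced_measure_little_o_general ψs hmeas hmod
end
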